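/- Let X and Y be Hilbert spaces, T : X → Y a bounded linear operator with dim N(T) < ∞, with a least-squares projection approximation {(X_n, T_n)} that has kernel approximability. Set g_n := gap(P_{N(T)^⊥}(X_n), T*T(X_n)). Then there exists n* ∈ ℕ such that for every n ≥ n* the following are equivalent: (i) g_n = 0; (ii) T_n† y = P_{X_n} T† y for all y ∈ D(T†); (iii) N(T) + T*T(X_n) ⊆ X_n. -/

import Mathlib

open Filter Topology Metric Submodule ContinuousLinearMap

/-- Orthogonal projection onto a subspace `K` (as an operator `H →L[ℝ] H`),
defined whenever `K` admits orthogonal projections (e.g. `K` closed). -/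
noncomputable def orthProj {H : Type*} [NormedAddCommGroup H] [InnerProductSpace ℝ H]
    (K : Submodule ℝ H) : H →L[ℝ] H :=
  open scoped Classical in
  if h : HasOrthogonalProjection K then
    haveI := h
    K.subtypeL.comp (orthogonalProjection K)
  else 0

/-- `δ(M,N) = sup {dist(x,N) : x ∈ M, ‖x‖ = 1}` (0 if `M = {0}`, as `sSup ∅ = 0` in `ℝ`). -/
noncomputable def deltaSub {H : Type*} [NormedAddCommGroup H] [InnerProductSpace ℝ H]
    (M N : Submodule ℝ H) : ℝ :=
  sSup {d : ℝ | ∃ x ∈ M, ‖x‖ = 1 ∧ d = Metric.infDist x (N : Set H)}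

noncomputable def gapSub {H : Type*} [NormedAddCommGroup H] [InnerProductSpace ℝ H]
    (M N : Submodule ℝ H) : ℝ :=
  max (deltaSub M N) (deltaSub N M)

/-! Kernel approximability and `dim N(T) < ∞` force `N(T) ⊆ X_n` for large `n`: an orthonormal
basis of `N(T)` is eventually uniformly close to `N(T) ∩ X_n`, whereas a unit vector of `N(T)`
orthogonal to `N(T) ∩ X_n` is at distance `1` from it. From then on
`P_{N(T)^⊥}(X_n) = X_n ∩ N(T)^⊥`, and `T*T(X_n) ⊆ X_n ∩ N(T)^⊥`, with equality as soon as
`T*T(X_n) ⊆ X_n` because `T*T` is injective on the finite-dimensional space `X_n ∩ N(T)^⊥`;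
this is (i) ⇔ (iii).
For (ii), `P_{X_n} T†y` is the minimal-norm least-squares solution of `T_n x = y` iff
`T(T†y - P_{X_n} T†y) ⊥ T(X_n)`, i.e. `T*T(X_n) ⊥ (I - P_{X_n}) T†y`. Since `T†(Tw) = w` for every
`w ⊥ X_n`, this holds for all `y` iff `T*T(X_n) ⊆ X_n`. -/

section InnerProductSpace

variable {H : Type*} [NormedAddCommGroup H] [InnerProductSpace ℝ H]

theorem orthProj_eq_starProjection (K : Submodule ℝ H) [K.HasOrthogonalProjection] :
    orthProj K = K.starProjection := by
  rw [orthProj, dif_pos ‹_›]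
  rfl

theorem map_starProjection_orthogonal_eq_inf {K V : Submodule ℝ H} [K.HasOrthogonalProjection]
    (hKV : K ≤ V) : V.map Kᗮ.starProjection.toLinearMap = V ⊓ Kᗮ := by
  refine le_antisymm ?_ fun v hv => ⟨v, hv.1, Kᗮ.starProjection_eq_self_iff.2 hv.2⟩
  rintro _ ⟨x, hx, rfl⟩
  refine ⟨?_, Kᗮ.starProjection_apply_mem x⟩
  have hxK : K.starProjection x ∈ V := hKV (K.starProjection_apply_mem x)
  simpa [Submodule.starProjection_orthogonal_val] using V.sub_mem hx hxK

theorem eq_of_mem_orthogonal_ker {Z : Type*} [AddCommGroup Z] [Module ℝ Z] {f : H →ₗ[ℝ] Z}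
    {a b : H} (ha : a ∈ (LinearMap.ker f)ᗮ) (hb : b ∈ (LinearMap.ker f)ᗮ) (h : f a = f b) :
    a = b := by
  have hab : a - b ∈ LinearMap.ker f ⊓ (LinearMap.ker f)ᗮ :=
    ⟨by simp [h], Submodule.sub_mem _ ha hb⟩
  rwa [Submodule.inf_orthogonal_eq_bot, Submodule.mem_bot, sub_eq_zero] at hab

theorem starProjection_mem_orthogonal_ker_comp {F : Type*} [NormedAddCommGroup F]
    [NormedSpace ℝ F] (T : H →L[ℝ] F) (V : Submodule ℝ H) [V.HasOrthogonalProjection] {x : H}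
    (hx : x ∈ T.kerᗮ) : V.starProjection x ∈ (T ∘L V.starProjection).kerᗮ := by
  intro k hk
  rw [← V.inner_starProjection_left_eq_right]
  exact hx _ hk

theorem infDist_eq_norm_of_mem_orthogonal {K : Submodule ℝ H} {v : H} (hv : v ∈ Kᗮ) :
    infDist v K = ‖v‖ := by
  refine le_antisymm (by simpa using infDist_le_dist_of_mem (x := v) K.zero_mem) ?_
  refine (le_infDist ⟨0, K.zero_mem⟩).2 fun m hm => ?_
  have hpy := norm_sub_sq_eq_norm_sq_add_norm_sq_real (K.inner_left_of_mem_orthogonal hm hv)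
  rw [dist_eq_norm]
  nlinarith [norm_nonneg v, norm_nonneg (v - m), mul_self_nonneg ‖m‖]

theorem deltaSub_nonneg (M N : Submodule ℝ H) : 0 ≤ deltaSub M N :=
  Real.sSup_nonneg (by rintro d ⟨x, -, -, rfl⟩; exact infDist_nonneg)

theorem deltaSub_eq_zero_iff_le {M N : Submodule ℝ H} (hN : IsClosed (N : Set H)) :
    deltaSub M N = 0 ↔ M ≤ N := by
  refine ⟨fun h x hx => ?_, fun h => le_antisymm ?_ (deltaSub_nonneg M N)⟩
  · rcases eq_or_ne x 0 with rfl | hx0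
    · exact N.zero_mem
    have hnx : ‖x‖⁻¹ ≠ 0 := inv_ne_zero (norm_ne_zero_iff.2 hx0)
    have hbdd : BddAbove {d : ℝ | ∃ x ∈ M, ‖x‖ = 1 ∧ d = infDist x (N : Set H)} := by
      refine ⟨1, ?_⟩
      rintro d ⟨z, -, hz, rfl⟩
      simpa [hz] using infDist_le_dist_of_mem (x := z) N.zero_mem
    have hdist : infDist (‖x‖⁻¹ • x) (N : Set H) ≤ 0 :=
      h ▸ le_csSup hbdd ⟨_, M.smul_mem _ hx, norm_smul_inv_norm hx0, rfl⟩
    rw [← N.smul_mem_iff hnx, ← SetLike.mem_coe, hN.mem_iff_infDist_zero ⟨0, N.zero_mem⟩]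
    exact le_antisymm hdist infDist_nonneg
  · refine Real.sSup_nonpos ?_
    rintro d ⟨x, hx, -, rfl⟩
    exact (infDist_zero_of_mem (h hx)).le

theorem gapSub_eq_zero_iff {M N : Submodule ℝ H} (hM : IsClosed (M : Set H))
    (hN : IsClosed (N : Set H)) : gapSub M N = 0 ↔ M = N := by
  rw [le_antisymm_iff (a := M), ← deltaSub_eq_zero_iff_le hN, ← deltaSub_eq_zero_iff_le hM,
    gapSub]
  grind [deltaSub_nonneg]

theorem infDist_sum_smul_le {ι : Type*} (s : Finset ι) (K : Submodule ℝ H) (c : ι → ℝ)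
    (x : ι → H) :
    infDist (∑ i ∈ s, c i • x i) K ≤ ∑ i ∈ s, |c i| * infDist (x i) K := by
  have hq (x : H) : infDist x K = ‖K.mkQ x‖ :=
    (QuotientAddGroup.norm_mk (S := K.toAddSubgroup) x).symm
  calc infDist (∑ i ∈ s, c i • x i) K = ‖∑ i ∈ s, c i • K.mkQ (x i)‖ := by simp [hq]
    _ ≤ ∑ i ∈ s, ‖c i • K.mkQ (x i)‖ := norm_sum_le _ _
    _ = ∑ i ∈ s, |c i| * infDist (x i) K := by simp [norm_smul, hq]

theorem eventually_le_of_tendsto_infDist_inf (N : Submodule ℝ H) [FiniteDimensional ℝ N]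
    (M : ℕ → Submodule ℝ H)
    (h : ∀ x ∈ N, Tendsto (fun n => infDist x ((N ⊓ M n : Submodule ℝ H) : Set H)) atTop (𝓝 0)) :
    ∀ᶠ n in atTop, N ≤ M n := by
  set e := stdOrthonormalBasis ℝ N
  have hsum : Tendsto (fun n => ∑ i, infDist (e i : H) ((N ⊓ M n : Submodule ℝ H) : Set H))
      atTop (𝓝 0) := by
    simpa using tendsto_finsetSum Finset.univ fun i _ => h _ (e i).2
  filter_upwards [hsum.eventually_lt_const one_pos] with n hn
  set K : Submodule ℝ H := N ⊓ M n
  have : FiniteDimensional ℝ K := Submodule.finiteDimensional_of_le inf_le_left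
  suffices hbot : Kᗮ ⊓ N = ⊥ by
    have hK := Submodule.sup_orthogonal_inf_of_hasOrthogonalProjection (inf_le_left : K ≤ N)
    rw [hbot, sup_bot_eq] at hK
    exact hK ▸ inf_le_right
  refine (Submodule.eq_bot_iff _).2 fun v ⟨hvK, hvN⟩ => ?_
  have hv : v = ∑ i, inner ℝ (e i : H) v • (e i : H) := by
    simpa using congrArg Subtype.val (e.sum_repr' ⟨v, hvN⟩).symm
  have hle : ‖v‖ ≤ ‖v‖ * ∑ i, infDist (e i : H) K :=
    calc ‖v‖ = infDist v K := (infDist_eq_norm_of_mem_orthogonal hvK).symm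
      _ ≤ ∑ i, |inner ℝ (e i : H) v| * infDist (e i : H) K := by
        conv_lhs => rw [hv]
        exact infDist_sum_smul_le _ _ _ _
      _ ≤ ∑ i, ‖v‖ * infDist (e i : H) K := by
        refine Finset.sum_le_sum fun i _ => mul_le_mul_of_nonneg_right ?_ infDist_nonneg
        rw [← one_mul ‖v‖, ← e.orthonormal.1 i]
        exact abs_real_inner_le_norm _ _
      _ = ‖v‖ * ∑ i, infDist (e i : H) K := (Finset.mul_sum _ _ _).symm
  exact norm_eq_zero.1 (by nlinarith [norm_nonneg v])

end InnerProductSpace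

theorem Submodule.map_eq_self_of_map_le {K E : Type*} [Field K] [AddCommGroup E] [Module K E]
    (f : E →ₗ[K] E) {W : Submodule K E} [FiniteDimensional K W] (hW : W.map f ≤ W)
    (hf : Disjoint W (LinearMap.ker f)) : W.map f = W := by
  refine Submodule.eq_of_le_of_finrank_eq hW ?_
  rw [← LinearMap.range_domRestrict,
    ← (LinearEquiv.ofInjective _ (LinearMap.injective_domRestrict_iff.2 hf)).finrank_eq]

section LeastSquares

variable {X Y : Type*} [NormedAddCommGroup X] [InnerProductSpace ℝ X] [CompleteSpace X]
  [NormedAddCommGroup Y] [InnerProductSpace ℝ Y] [CompleteSpace Y] (T : X →L[ℝ] Y)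

theorem map_adjoint_comp_self_eq_inf_orthogonal_ker {V : Submodule ℝ X} [FiniteDimensional ℝ V]
    (hV : V.map (adjoint T ∘L T).toLinearMap ≤ V) :
    V.map (adjoint T ∘L T).toLinearMap = V ⊓ T.kerᗮ := by
  have hrange : ∀ x, (adjoint T ∘L T) x ∈ T.kerᗮ := fun x k hk => by
    rw [comp_apply, adjoint_inner_right, show T k = 0 from hk, inner_zero_left]
  have hle : V.map (adjoint T ∘L T).toLinearMap ≤ V ⊓ T.kerᗮ := by
    rintro _ ⟨x, hx, rfl⟩
    exact ⟨hV (mem_map_of_mem hx), hrange x⟩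
  refine le_antisymm hle ?_
  have hW : (V ⊓ T.kerᗮ).map (adjoint T ∘L T).toLinearMap ≤ V ⊓ T.kerᗮ :=
    (Submodule.map_mono inf_le_left).trans hle
  have hdisj : Disjoint (V ⊓ T.kerᗮ) (adjoint T ∘L T).ker := by
    rw [ker_adjoint_comp_self]
    exact (Submodule.orthogonal_disjoint _).symm.mono_left inf_le_right
  calc V ⊓ T.kerᗮ
      = (V ⊓ T.kerᗮ).map (adjoint T ∘L T).toLinearMap :=
        (Submodule.map_eq_self_of_map_le _ hW hdisj).symm
    _ ≤ V.map (adjoint T ∘L T).toLinearMap := Submodule.map_mono inf_le_left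

theorem gapSub_map_eq_zero_iff {V : Submodule ℝ X} [FiniteDimensional ℝ V] (hV : T.ker ≤ V) :
    gapSub (V.map T.kerᗮ.starProjection.toLinearMap) (V.map (adjoint T ∘L T).toLinearMap) = 0 ↔
      V.map (adjoint T ∘L T).toLinearMap ≤ V := by
  rw [gapSub_eq_zero_iff (Submodule.closed_of_finiteDimensional _)
    (Submodule.closed_of_finiteDimensional _), map_starProjection_orthogonal_eq_inf hV]
  exact ⟨fun h => h ▸ inf_le_left,
    fun h => (map_adjoint_comp_self_eq_inf_orthogonal_ker T h).symm⟩

theorem apply_starProjection_eq_starProjection_map_iff (V : Submodule ℝ X)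
    [V.HasOrthogonalProjection] [(V.map T.toLinearMap).HasOrthogonalProjection] {x : X} {y : Y}
    (hx : T x = T.range.topologicalClosure.starProjection y) :
    T (V.starProjection x) = (V.map T.toLinearMap).starProjection y ↔
      ∀ v ∈ V, inner ℝ ((adjoint T ∘L T) v) (x - V.starProjection x) = 0 := by
  have hres : y - T x ∈ (V.map T.toLinearMap)ᗮ := by
    refine Submodule.orthogonal_le (LinearMap.map_le_range.trans (le_topologicalClosure _)) ?_
    exact hx ▸ sub_starProjection_mem_orthogonal y
  have hsplit : y - T (V.starProjection x) = (y - T x) + T (x - V.starProjection x) := by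
    rw [map_sub]; abel
  simp only [comp_apply, adjoint_inner_left]
  constructor
  · intro h v hv
    have horth := (V.map T.toLinearMap).sub_starProjection_mem_orthogonal y _ (mem_map_of_mem hv)
    rwa [← h, hsplit, inner_add_right, hres _ (mem_map_of_mem hv), zero_add] at horth
  · intro h
    refine (eq_starProjection_of_mem_orthogonal (mem_map_of_mem (V.starProjection_apply_mem x))
      (hsplit ▸ add_mem hres ?_)).symm
    rintro _ ⟨v, hv, rfl⟩
    exact h v hv

theorem eq_starProjection_iff_forall_inner_eq_zero (V : Submodule ℝ X)
    [V.HasOrthogonalProjection] [(V.map T.toLinearMap).HasOrthogonalProjection] {x x' : X}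
    {y : Y} (hx : x ∈ T.kerᗮ ∧ T x = T.range.topologicalClosure.starProjection y)
    (hx' : x' ∈ (T ∘L V.starProjection).kerᗮ ∧
      (T ∘L V.starProjection) x' = (V.map T.toLinearMap).starProjection y) :
    x' = V.starProjection x ↔
      ∀ v ∈ V, inner ℝ ((adjoint T ∘L T) v) (x - V.starProjection x) = 0 := by
  have hidem : (T ∘L V.starProjection) (V.starProjection x) = T (V.starProjection x) := by
    rw [comp_apply, V.starProjection_eq_self_iff.2 (V.starProjection_apply_mem _)]
  rw [← apply_starProjection_eq_starProjection_map_iff T V hx.2, ← hx'.2, ← hidem]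
  refine ⟨fun h => by rw [h], fun h => ?_⟩
  exact eq_of_mem_orthogonal_ker hx'.1 (starProjection_mem_orthogonal_ker_comp T V hx.1) h.symm

theorem forall_eq_starProjection_iff_map_le {V : Submodule ℝ X} [FiniteDimensional ℝ V]
    (hV : T.ker ≤ V) (Tdag : Y → X)
    (hTdag : ∀ y ∈ T.range ⊔ T.rangeᗮ,
      Tdag y ∈ T.kerᗮ ∧ T (Tdag y) = T.range.topologicalClosure.starProjection y)
    (S : Y → X) (hS : ∀ y, S y ∈ (T ∘L V.starProjection).kerᗮ ∧
      (T ∘L V.starProjection) (S y) = (V.map T.toLinearMap).starProjection y) :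
    (∀ y ∈ T.range ⊔ T.rangeᗮ, S y = V.starProjection (Tdag y)) ↔
      V.map (adjoint T ∘L T).toLinearMap ≤ V := by
  have key (y) (hy : y ∈ T.range ⊔ T.rangeᗮ) :=
    eq_starProjection_iff_forall_inner_eq_zero T V (hTdag y hy) (hS y)
  constructor
  · rintro h _ ⟨v, hv, rfl⟩
    rw [← V.orthogonal_orthogonal]
    intro w hw
    have hTw : T w ∈ T.range ⊔ T.rangeᗮ := mem_sup_left ⟨w, rfl⟩
    have hdag : Tdag (T w) = w :=
      eq_of_mem_orthogonal_ker (hTdag _ hTw).1 (Submodule.orthogonal_le hV hw) <|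
        (hTdag _ hTw).2.trans (starProjection_eq_self_iff.2 (le_topologicalClosure _ ⟨w, rfl⟩))
    have := (key _ hTw).1 (h _ hTw) v hv
    rwa [hdag, (starProjection_apply_eq_zero_iff V).2 hw, sub_zero, real_inner_comm] at this
  · intro h y hy
    exact (key y hy).2 fun v hv =>
      inner_right_of_mem_orthogonal (h (mem_map_of_mem hv)) (V.sub_starProjection_mem_orthogonal _)

end LeastSquares

variable {X Y : Type*} [NormedAddCommGroup X] [InnerProductSpace ℝ X] [CompleteSpace X]
  [NormedAddCommGroup Y] [InnerProductSpace ℝ Y] [CompleteSpace Y]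

theorem stmt4_general
    (T : X →L[ℝ] Y) (Xn : ℕ → Submodule ℝ X)
    (hfin : ∀ n, FiniteDimensional ℝ (Xn n))
    (Tn : ℕ → X →L[ℝ] Y) (hTn : ∀ n, Tn n = T.comp (orthProj (Xn n)))
    (Tdag : Y → X)
    (hTdag : ∀ y ∈ (LinearMap.range (T : X →ₗ[ℝ] Y) ⊔ (LinearMap.range (T : X →ₗ[ℝ] Y))ᗮ : Submodule ℝ Y),
      Tdag y ∈ (LinearMap.ker (T : X →ₗ[ℝ] Y))ᗮ ∧
        T (Tdag y) = orthProj (LinearMap.range (T : X →ₗ[ℝ] Y)).topologicalClosure y)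
    (Tdagn : ℕ → Y → X)
    (hTdagn : ∀ n (y : Y), Tdagn n y ∈ (LinearMap.ker (Tn n : X →ₗ[ℝ] Y))ᗮ ∧
      (Tn n) (Tdagn n y) = orthProj ((Xn n).map (T : X →ₗ[ℝ] Y)) y)
    (hker : FiniteDimensional ℝ (LinearMap.ker (T : X →ₗ[ℝ] Y)))
    (hKA : (∀ x : X, x ∈ LinearMap.ker (T : X →ₗ[ℝ] Y) ↔
      Tendsto (fun n => Metric.infDist x ((LinearMap.ker (T : X →ₗ[ℝ] Y) ⊓ Xn n : Submodule ℝ X) : Set X))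
        atTop (𝓝 0))) :
    ∃ nStar : ℕ, ∀ n ≥ nStar,
      ((gapSub ((Xn n).map (orthProj ((LinearMap.ker (T : X →ₗ[ℝ] Y))ᗮ)).toLinearMap) ((Xn n).map ((ContinuousLinearMap.adjoint T).comp T).toLinearMap) = 0)
        ↔ (∀ y ∈ (LinearMap.range (T : X →ₗ[ℝ] Y) ⊔ (LinearMap.range (T : X →ₗ[ℝ] Y))ᗮ : Submodule ℝ Y),
            Tdagn n y = orthProj (Xn n) (Tdag y))) ∧
      ((gapSub ((Xn n).map (orthProj ((LinearMap.ker (T : X →ₗ[ℝ] Y))ᗮ)).toLinearMap) ((Xn n).map ((ContinuousLinearMap.adjoint T).comp T).toLinearMap) = 0)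
        ↔ (LinearMap.ker (T : X →ₗ[ℝ] Y) ⊔ (Xn n).map ((ContinuousLinearMap.adjoint T).comp T).toLinearMap ≤ Xn n)) := by
  obtain rfl : Tn = fun n => T.comp (orthProj (Xn n)) := funext hTn
  obtain ⟨nStar, hstar⟩ := eventually_atTop.1
    (eventually_le_of_tendsto_infDist_inf _ Xn fun x hx => (hKA x).1 hx)
  refine ⟨nStar, fun n hn => ?_⟩
  have hV := hstar n hn
  have := hfin n
  have hTdagn := hTdagn n
  simp only [orthProj_eq_starProjection] at hTdag hTdagn ⊢
  rw [forall_eq_starProjection_iff_map_le T hV Tdag hTdag _ hTdagn, gapSub_map_eq_zero_iff T hV,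
    sup_le_iff, and_iff_right hV]
  exact ⟨Iff.rfl, Iff.rfl⟩

/-- Characterization of zero offset angle, for large `n`. -/
theorem stmt4
    (T : X →L[ℝ] Y) (Xn : ℕ → Submodule ℝ X)
    (hfin : ∀ n, FiniteDimensional ℝ (Xn n))
    (hinf : ¬ FiniteDimensional ℝ X)
    (hproj : ∀ x : X, Tendsto (fun n => orthProj (Xn n) x) atTop (𝓝 x))
    (Tn : ℕ → X →L[ℝ] Y) (hTn : ∀ n, Tn n = T.comp (orthProj (Xn n)))
    (Tdag : Y → X)
    (hTdag : ∀ y ∈ (LinearMap.range (T : X →ₗ[ℝ] Y) ⊔ (LinearMap.range (T : X →ₗ[ℝ] Y))ᗮ : Submodule ℝ Y),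
      Tdag y ∈ (LinearMap.ker (T : X →ₗ[ℝ] Y))ᗮ ∧
        T (Tdag y) = orthProj (LinearMap.range (T : X →ₗ[ℝ] Y)).topologicalClosure y)
    (Tdagn : ℕ → Y → X)
    (hTdagn : ∀ n (y : Y), Tdagn n y ∈ (LinearMap.ker (Tn n : X →ₗ[ℝ] Y))ᗮ ∧
      (Tn n) (Tdagn n y) = orthProj ((Xn n).map (T : X →ₗ[ℝ] Y)) y)
    (hker : FiniteDimensional ℝ (LinearMap.ker (T : X →ₗ[ℝ] Y)))
    (hKA : (∀ x : X, x ∈ LinearMap.ker (T : X →ₗ[ℝ] Y) ↔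
      Tendsto (fun n => Metric.infDist x ((LinearMap.ker (T : X →ₗ[ℝ] Y) ⊓ Xn n : Submodule ℝ X) : Set X))
        atTop (𝓝 0))) :
    ∃ nStar : ℕ, ∀ n ≥ nStar,
      ((gapSub ((Xn n).map (orthProj ((LinearMap.ker (T : X →ₗ[ℝ] Y))ᗮ)).toLinearMap) ((Xn n).map ((ContinuousLinearMap.adjoint T).comp T).toLinearMap) = 0)
        ↔ (∀ y ∈ (LinearMap.range (T : X →ₗ[ℝ] Y) ⊔ (LinearMap.range (T : X →ₗ[ℝ] Y))ᗮ : Submodule ℝ Y),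
            Tdagn n y = orthProj (Xn n) (Tdag y))) ∧
      ((gapSub ((Xn n).map (orthProj ((LinearMap.ker (T : X →ₗ[ℝ] Y))ᗮ)).toLinearMap) ((Xn n).map ((ContinuousLinearMap.adjoint T).comp T).toLinearMap) = 0)
        ↔ (LinearMap.ker (T : X →ₗ[ℝ] Y) ⊔ (Xn n).map ((ContinuousLinearMap.adjoint T).comp T).toLinearMap ≤ Xn n)) :=
  stmt4_general T Xn hfin Tn hTn Tdag hTdag Tdagn hTdagn hker hKA
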